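/- Let D = (P,𝓑) be a symmetric 2-(v,k,λ) design and let G be a flag-transitive automorphism group of D. If for a block B the induced permutation group G_B^B is abelian, then G_B acts faithfully on B (the pointwise stabilizer G_{(B)} is trivial), and there exists a point x ∈ P∖B such that G_B = G_x. -/

import Mathlib

/-!
Flag-transitivity transports the hypothesis on `B` to every block `C`, and a transitive abelian
permutation group is regular, so an element of `G` fixing a flag `(a, C)` fixes `C` pointwise.
Every block it fixes meets `C` in `λ > 0` points and is therefore fixed pointwise too; as an
automorphism of a symmetric design fixes as many points as blocks, counting incidences shows that
it is the identity. Hence flag stabilizers are trivial, `G_B` is faithful and abelian on `B`, and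
`|G_B| = |G_x| = k` for every point `x`.

Since `λ < k`, some prime `p` has `p ^ ν_p(k) ∤ λ`, and `(v - 1) λ = k (k - 1)` forces `p ∣ v - 1`.
A Sylow `p`-subgroup `S` of `G_B` then has a fixed point because `v ≡ 1 (mod p)`, and only one,
because `S` would act semiregularly on the `λ` blocks through two fixed points. The abelian group
`G_B` normalises `S`, so it fixes that point `x`, which lies outside `B`; comparing orders gives
`G_B = G_x`.
-/

open scoped Pointwise

/-- A group action is primitive if it is transitive and every block is trivial
(this is the usual notion of a primitive permutation group). -/
def IsPrimitiveAction (G X : Type*) [Group G] [MulAction G X] : Prop :=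
  MulAction.IsPretransitive G X ∧
    ∀ B : Set X, MulAction.IsBlock G B → B.Subsingleton ∨ B = Set.univ

variable {P : Type*} [Fintype P] [DecidableEq P]

/-- `𝓑` is the block set of a (non-trivial) 2-design with parameters `(v, k, lam)`
on the point set `P`. -/
structure IsDesign (𝓑 : Finset (Finset P)) (v k lam : ℕ) : Prop where
  card_points : Fintype.card P = v
  blocks_card : ∀ B ∈ 𝓑, B.card = k
  two_lt_k : 2 < k
  k_lt_v : k < v - 1
  lam_pos : 0 < lam
  pair_blocks : ∀ x y : P, x ≠ y → (𝓑.filter fun B => x ∈ B ∧ y ∈ B).card = lam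

/-- `G` is an automorphism group of the design with block set `𝓑`:
every element of `G` maps blocks to blocks. -/
def IsAutGroup (G : Subgroup (Equiv.Perm P)) (𝓑 : Finset (Finset P)) : Prop :=
  ∀ g ∈ G, ∀ B ∈ 𝓑, g • B ∈ 𝓑

/-- `G` acts transitively on the flags of the design with block set `𝓑`. -/
def IsFlagTransitive (G : Subgroup (Equiv.Perm P)) (𝓑 : Finset (Finset P)) : Prop :=
  ∀ B₁ ∈ 𝓑, ∀ B₂ ∈ 𝓑, ∀ x₁ ∈ B₁, ∀ x₂ ∈ B₂, ∃ g ∈ G, g • x₁ = x₂ ∧ g • B₁ = B₂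

/-- `G` acts transitively on the blocks of the design with block set `𝓑`. -/
def IsBlockTransitive (G : Subgroup (Equiv.Perm P)) (𝓑 : Finset (Finset P)) : Prop :=
  ∀ B₁ ∈ 𝓑, ∀ B₂ ∈ 𝓑, ∃ g ∈ G, g • B₁ = B₂

open Finset MulAction
open scoped Matrix

theorem Matrix.smul_one_add_smul_ones_mul_eq_one {ι K : Type*} [Fintype ι] [DecidableEq ι]
    [Field K] {c d : K} (hc : c ≠ 0) (hcd : c + d * Fintype.card ι ≠ 0) :
    (c • 1 + d • Matrix.of fun _ _ => 1 : Matrix ι ι K) *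
      (c⁻¹ • 1 - (d / (c * (c + d * Fintype.card ι))) • Matrix.of fun _ _ => 1) = 1 := by
  ext i j
  simp only [Matrix.smul_of, Matrix.mul_apply, Matrix.add_apply, Matrix.sub_apply,
    Matrix.smul_apply, Matrix.one_apply, Matrix.of_apply, Pi.smul_apply, smul_eq_mul, mul_ite,
    ite_mul, mul_one, mul_zero, zero_mul, mul_sub, add_mul, sum_sub_distrib, sum_add_distrib,
    sum_ite_eq, sum_ite_eq', mem_univ, if_true, sum_const, card_univ, nsmul_eq_mul]
  split_ifs <;> field_simp <;> ring

/-- `σ` and `τ` preserve the invertible matrix `N`, so their permutation matrices are conjugate by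
`N` and have the same trace. -/
theorem Matrix.card_fixedPoints_eq_of_submatrix_eq {m n R : Type*} [Fintype m] [Fintype n]
    [DecidableEq m] [DecidableEq n] [Field R] [CharZero R] {N : Matrix m n R}
    {L : Matrix n m R} (hNL : N * L = 1) (hLN : L * N = 1) {σ : Equiv.Perm m}
    {τ : Equiv.Perm n} (hστ : N.submatrix σ τ = N) :
    #{i | σ i = i} = #{j | τ j = j} := by
  set Pσ := (1 : Matrix m m R).submatrix σ (Equiv.refl m)
  set Pτ := (1 : Matrix n n R).submatrix (Equiv.refl n) τ.symm
  have hPN : Pσ * N = N * Pτ := by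
    rw [Matrix.one_submatrix_mul, Matrix.mul_submatrix_one]
    ext i j
    simpa using congr_fun (congr_fun hστ i) (τ.symm j)
  have htrace : Pσ.trace = Pτ.trace :=
    calc Pσ.trace = (Pσ * N * L).trace := by rw [Matrix.mul_assoc, hNL, Matrix.mul_one]
      _ = (Pτ * L * N).trace := by
        rw [hPN, Matrix.mul_assoc, Matrix.trace_mul_comm, Matrix.mul_assoc]
      _ = Pτ.trace := by rw [Matrix.mul_assoc, hLN, Matrix.mul_one]
  simp only [Pσ, Pτ, Matrix.trace, Matrix.diag, Matrix.submatrix_apply, Matrix.one_apply,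
    Equiv.coe_refl, id, Finset.sum_boole, Equiv.eq_symm_apply] at htrace
  exact_mod_cast htrace

theorem exists_prime_dvd_sub_one_not_ordProj_dvd {v k lam : ℕ} (hlam : 0 < lam)
    (hk : lam < k) (h : (v - 1) * lam = k * (k - 1)) :
    ∃ p, p.Prime ∧ p ∣ v - 1 ∧ ¬ p ^ k.factorization p ∣ lam := by
  obtain ⟨p, e, hp, hek, helam⟩ : ∃ p e, p.Prime ∧ p ^ e ∣ k ∧ ¬ p ^ e ∣ lam := by
    have : ¬ k ∣ lam := fun hd => (Nat.le_of_dvd hlam hd).not_gt hk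
    simpa [Nat.dvd_iff_prime_pow_dvd_dvd lam k] using this
  have hq : ¬ p ^ k.factorization p ∣ lam := fun hd =>
    helam ((pow_dvd_pow p ((hp.pow_dvd_iff_le_factorization (by omega)).mp hek)).trans hd)
  refine ⟨p, hp, by_contra fun hpv => hq ?_, hq⟩
  have hcop : (p ^ k.factorization p).Coprime (v - 1) :=
    Nat.Coprime.pow_left _ ((Nat.Prime.coprime_iff_not_dvd hp).2 hpv)
  exact hcop.dvd_of_dvd_mul_left (h ▸ (Nat.ordProj_dvd k p).mul_right _)

theorem MulAction.card_eq_ncard_of_orbit_eq {Γ X : Type*} [Group Γ] [MulAction Γ X] {a : X}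
    {T : Set X} (horb : orbit Γ a = T) (hfree : ∀ γ : Γ, γ • a = a → γ = 1) :
    Nat.card Γ = T.ncard := by
  rw [← horb, ← index_stabilizer, (Subgroup.eq_bot_iff_forall (stabilizer Γ a)).2 hfree,
    Subgroup.index_bot]

theorem MulAction.card_dvd_card_of_free {Γ X : Type*} [Group Γ] [MulAction Γ X] [Finite X]
    (hfree : ∀ (γ : Γ) (x : X), γ • x = x → γ = 1) : Nat.card Γ ∣ Nat.card X := by
  classical
  have := Fintype.ofFinite X
  rw [Nat.card_congr (selfEquivSigmaOrbits Γ X), Nat.card_sigma]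
  exact Finset.dvd_sum fun ω _ => by
    rw [Nat.card_coe_set_eq, ← card_eq_ncard_of_orbit_eq rfl fun γ => hfree γ _]

section Incidence

variable {α : Type*} [DecidableEq α]

def incidenceMatrix (𝓑 : Finset (Finset α)) : Matrix α 𝓑 ℚ :=
  Matrix.of fun x C => if x ∈ (C : Finset α) then 1 else 0

theorem incidenceMatrix_mul_transpose_apply (𝓑 : Finset (Finset α)) (x y : α) :
    (incidenceMatrix 𝓑 * (incidenceMatrix 𝓑)ᵀ) x y = #{C ∈ 𝓑 | x ∈ C ∧ y ∈ C} := by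
  simp only [incidenceMatrix, Matrix.mul_apply, Matrix.transpose_apply, Matrix.of_apply,
    mul_ite, mul_one, mul_zero, ← ite_and]
  rw [sum_coe_sort 𝓑 fun C => if y ∈ C ∧ x ∈ C then (1 : ℚ) else 0, sum_boole]
  exact congrArg _ (congrArg _ (filter_congr fun _ _ => and_comm))

theorem transpose_mul_incidenceMatrix_apply [Fintype α] (𝓑 : Finset (Finset α)) (C D : 𝓑) :
    ((incidenceMatrix 𝓑)ᵀ * incidenceMatrix 𝓑) C D = #((C : Finset α) ∩ D) := by
  simp only [incidenceMatrix, Matrix.mul_apply, Matrix.transpose_apply, Matrix.of_apply,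
    mul_ite, mul_one, mul_zero, ← ite_and, sum_boole, ← mem_inter, filter_mem_eq_inter,
    univ_inter, inter_comm]

theorem ones_mul_incidenceMatrix_apply [Fintype α] (𝓑 : Finset (Finset α)) (x : α) (C : 𝓑) :
    ((Matrix.of fun _ _ => 1 : Matrix α α ℚ) * incidenceMatrix 𝓑) x C = #(C : Finset α) := by
  simp [incidenceMatrix, Matrix.mul_apply]

theorem incidenceMatrix_mul_ones_apply (𝓑 : Finset (Finset α)) (x : α) (C : 𝓑) :
    (incidenceMatrix 𝓑 * (Matrix.of fun _ _ => 1 : Matrix 𝓑 𝓑 ℚ)) x C = #{D ∈ 𝓑 | x ∈ D} := by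
  simp only [incidenceMatrix, Matrix.mul_apply, Matrix.of_apply, mul_one]
  rw [sum_coe_sort 𝓑 fun D => if x ∈ D then (1 : ℚ) else 0, sum_boole]

end Incidence

namespace IsDesign

variable {𝓑 : Finset (Finset P)} {v k lam : ℕ}

theorem card_filter_mem_mul (hD : IsDesign 𝓑 v k lam) (x : P) :
    #{C ∈ 𝓑 | x ∈ C} * (k - 1) = (v - 1) * lam := by
  have := card_mul_eq_card_mul (s := {C ∈ 𝓑 | x ∈ C}) (t := univ.erase x)
    (r := fun C y => y ∈ C) (m := k - 1) (n := lam) ?_ ?_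
  · rwa [card_erase_of_mem (mem_univ x), card_univ, hD.card_points] at this
  · intro C hC
    rw [mem_filter] at hC
    have : (univ.erase x).bipartiteAbove (fun C y => y ∈ C) C = C.erase x := by
      ext; simp [bipartiteAbove, and_comm]
    rw [this, card_erase_of_mem hC.2, hD.blocks_card C hC.1]
  · intro y hy
    rw [bipartiteBelow, filter_filter]
    exact hD.pair_blocks x y (ne_of_mem_erase hy).symm

theorem card_filter_mem (hD : IsDesign 𝓑 v k lam) (hsym : #𝓑 = v) (x : P) :
    #{C ∈ 𝓑 | x ∈ C} = k := by
  have hk : 0 < k - 1 := by have := hD.two_lt_k; omega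
  have hv : 0 < v := by have := hD.k_lt_v; omega
  have hr (y : P) : #{C ∈ 𝓑 | y ∈ C} = #{C ∈ 𝓑 | x ∈ C} :=
    Nat.eq_of_mul_eq_mul_right hk
      ((hD.card_filter_mem_mul y).trans (hD.card_filter_mem_mul x).symm)
  have := card_mul_eq_card_mul (s := 𝓑) (t := univ) (r := fun C y => y ∈ C) (m := k)
    (fun C hC => by simp [bipartiteAbove, hD.blocks_card C hC]) (fun y _ => hr y)
  rw [hsym, card_univ, hD.card_points] at this
  exact (Nat.eq_of_mul_eq_mul_left hv this).symm

theorem sub_one_mul_lam (hD : IsDesign 𝓑 v k lam) (hsym : #𝓑 = v) :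
    (v - 1) * lam = k * (k - 1) := by
  obtain ⟨x⟩ : Nonempty P := by
    rw [← Fintype.card_pos_iff, hD.card_points]; have := hD.k_lt_v; omega
  rw [← hD.card_filter_mem_mul x, hD.card_filter_mem hsym x]

theorem lam_lt (hD : IsDesign 𝓑 v k lam) (hsym : #𝓑 = v) : lam < k := by
  have h := hD.sub_one_mul_lam hsym
  have hkv : k - 1 < v - 1 := by have := hD.k_lt_v; omega
  have hk : 0 < k := by have := hD.two_lt_k; omega
  by_contra! hlam
  refine lt_irrefl ((v - 1) * lam) ?_
  calc (v - 1) * lam = k * (k - 1) := h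
    _ < k * (v - 1) := Nat.mul_lt_mul_of_pos_left hkv hk
    _ ≤ lam * (v - 1) := Nat.mul_le_mul_right _ hlam
    _ = (v - 1) * lam := mul_comm _ _

theorem incidenceMatrix_mul_transpose (hD : IsDesign 𝓑 v k lam) (hsym : #𝓑 = v) :
    incidenceMatrix 𝓑 * (incidenceMatrix 𝓑)ᵀ =
      ((k : ℚ) - lam) • 1 + (lam : ℚ) • Matrix.of fun _ _ => 1 := by
  ext x y
  rw [incidenceMatrix_mul_transpose_apply]
  by_cases hxy : x = y
  · subst hxy
    simp [hD.card_filter_mem hsym]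
  · simp [hxy, hD.pair_blocks x y hxy]

theorem exists_inverse_incidenceMatrix (hD : IsDesign 𝓑 v k lam) (hsym : #𝓑 = v) :
    ∃ L : Matrix 𝓑 P ℚ, incidenceMatrix 𝓑 * L = 1 ∧ L * incidenceMatrix 𝓑 = 1 := by
  have hc : (k : ℚ) - lam ≠ 0 := sub_ne_zero.mpr (by exact_mod_cast (hD.lam_lt hsym).ne')
  have hcl : (k : ℚ) - lam + lam * Fintype.card P ≠ 0 := by
    have : (lam : ℚ) < k := by exact_mod_cast hD.lam_lt hsym
    positivity
  have hNL := Matrix.smul_one_add_smul_ones_mul_eq_one hc hcl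
  rw [← hD.incidenceMatrix_mul_transpose hsym, Matrix.mul_assoc] at hNL
  refine ⟨_, hNL, (Matrix.mul_eq_one_comm_of_card_eq P 𝓑 ℚ ?_).mp hNL⟩
  rw [Fintype.card_coe, hsym, hD.card_points]

theorem transpose_mul_incidenceMatrix (hD : IsDesign 𝓑 v k lam) (hsym : #𝓑 = v) :
    (incidenceMatrix 𝓑)ᵀ * incidenceMatrix 𝓑 =
      ((k : ℚ) - lam) • 1 + (lam : ℚ) • Matrix.of fun _ _ => 1 := by
  obtain ⟨L, -, hLN⟩ := hD.exists_inverse_incidenceMatrix hsym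
  -- `N` has all row and column sums `k`, so it intertwines `A` on points with `A` on blocks,
  -- and `Nᵀ N = N⁻¹ (N Nᵀ) N = A`.
  have hcomm :
      (((k : ℚ) - lam) • 1 + (lam : ℚ) • Matrix.of fun _ _ => 1 : Matrix P P ℚ) *
          incidenceMatrix 𝓑 =
        incidenceMatrix 𝓑 * (((k : ℚ) - lam) • 1 + (lam : ℚ) • Matrix.of fun _ _ => 1 :
          Matrix 𝓑 𝓑 ℚ) := by
    ext x C
    simp only [Matrix.add_mul, Matrix.mul_add, Matrix.smul_mul, Matrix.mul_smul, Matrix.one_mul,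
      Matrix.mul_one, Matrix.add_apply, Matrix.smul_apply, ones_mul_incidenceMatrix_apply,
      incidenceMatrix_mul_ones_apply, hD.blocks_card C C.2, hD.card_filter_mem hsym]
  calc (incidenceMatrix 𝓑)ᵀ * incidenceMatrix 𝓑
      = L * (incidenceMatrix 𝓑 * (incidenceMatrix 𝓑)ᵀ) * incidenceMatrix 𝓑 := by
        rw [← Matrix.mul_assoc, hLN, Matrix.one_mul]
    _ = _ := by
        rw [hD.incidenceMatrix_mul_transpose hsym, Matrix.mul_assoc, hcomm, ← Matrix.mul_assoc,
          hLN, Matrix.one_mul]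

theorem card_inter (hD : IsDesign 𝓑 v k lam) (hsym : #𝓑 = v) {C₁ C₂ : Finset P} (h₁ : C₁ ∈ 𝓑)
    (h₂ : C₂ ∈ 𝓑) (hne : C₁ ≠ C₂) : #(C₁ ∩ C₂) = lam := by
  have := congr_fun₂ (hD.transpose_mul_incidenceMatrix hsym) ⟨C₁, h₁⟩ ⟨C₂, h₂⟩
  rw [transpose_mul_incidenceMatrix_apply] at this
  simp_all

theorem card_fixedPoints_eq (hD : IsDesign 𝓑 v k lam) (hsym : #𝓑 = v) (g : Equiv.Perm P)
    (hg : ∀ C ∈ 𝓑, g • C ∈ 𝓑) : #{x | g x = x} = #{C ∈ 𝓑 | g • C = C} := by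
  obtain ⟨L, hNL, hLN⟩ := hD.exists_inverse_incidenceMatrix hsym
  let τ : Equiv.Perm 𝓑 := Equiv.ofBijective (fun C => ⟨g • (C : Finset P), hg C C.2⟩)
    (Finite.injective_iff_bijective.mp fun C D h =>
      Subtype.ext (smul_left_cancel g (congrArg Subtype.val h)))
  have hgτ : (incidenceMatrix 𝓑).submatrix g τ = incidenceMatrix 𝓑 := by
    ext x C
    simp [incidenceMatrix, τ, ← Equiv.Perm.smul_def, Finset.smul_mem_smul_finset_iff]
  rw [Matrix.card_fixedPoints_eq_of_submatrix_eq hNL hLN hgτ,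
    ← card_map (Function.Embedding.subtype _)]
  congr 1
  ext C
  simp [τ, Subtype.ext_iff, and_comm]

/-- Count incidences between the fixed points and the (equally many) fixed blocks. -/
theorem smul_eq_of_fixedPoint_mem (hD : IsDesign 𝓑 v k lam) (hsym : #𝓑 = v) {g : Equiv.Perm P}
    (hg : ∀ C ∈ 𝓑, g • C ∈ 𝓑) (hfixed : ∀ C ∈ 𝓑, g • C = C → ∀ c ∈ C, g c = c)
    {x : P} (hx : g x = x) {C : Finset P} (hC : C ∈ 𝓑) (hxC : x ∈ C) : g • C = C := by
  set F : Finset P := {x | g x = x}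
  set 𝓕 : Finset (Finset P) := {C ∈ 𝓑 | g • C = C}
  have hsub (x : P) : {C ∈ 𝓕 | x ∈ C} ⊆ {C ∈ 𝓑 | x ∈ C} :=
    filter_subset_filter _ (filter_subset _ _)
  have hcount : ∑ x ∈ F, #{C ∈ 𝓕 | x ∈ C} = ∑ _x ∈ F, k :=
    calc ∑ x ∈ F, #{C ∈ 𝓕 | x ∈ C} = ∑ C ∈ 𝓕, #{x ∈ F | x ∈ C} :=
          sum_card_bipartiteAbove_eq_sum_card_bipartiteBelow _
      _ = ∑ _C ∈ 𝓕, k := sum_congr rfl fun C hC => by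
          obtain ⟨hC, hgC⟩ := mem_filter.mp hC
          rw [filter_mem_eq_inter, inter_eq_right.mpr fun c hc =>
            mem_filter.mpr ⟨mem_univ c, hfixed C hC hgC c hc⟩, hD.blocks_card C hC]
      _ = ∑ _x ∈ F, k := by rw [sum_const, sum_const, hD.card_fixedPoints_eq hsym g hg]
  have hxF : x ∈ F := mem_filter.mpr ⟨mem_univ x, hx⟩
  have hcard := (sum_eq_sum_iff_of_le fun x _ =>
    (card_le_card (hsub x)).trans (hD.card_filter_mem hsym x).le).mp hcount x hxF
  rw [← hD.card_filter_mem hsym x] at hcard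
  have hC𝓕 : C ∈ {C ∈ 𝓕 | x ∈ C} := by
    rw [eq_of_subset_of_card_le (hsub x) hcard.ge]; exact mem_filter.mpr ⟨hC, hxC⟩
  exact (mem_filter.mp (mem_filter.mp hC𝓕).1).2

theorem eq_one_of_fixes_block (hD : IsDesign 𝓑 v k lam) (hsym : #𝓑 = v) {g : Equiv.Perm P}
    (hg : ∀ C ∈ 𝓑, g • C ∈ 𝓑) (hloc : ∀ C ∈ 𝓑, g • C = C → ∀ a ∈ C, g a = a → ∀ c ∈ C, g c = c)
    {B : Finset P} (hB : B ∈ 𝓑) (hfix : ∀ a ∈ B, g a = a) : g = 1 := by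
  have hfixed : ∀ C ∈ 𝓑, g • C = C → ∀ c ∈ C, g c = c := by
    intro C hC hgC
    obtain rfl | hCB := eq_or_ne C B
    · exact hfix
    obtain ⟨a, ha⟩ : (C ∩ B).Nonempty := by
      rw [← card_pos, hD.card_inter hsym hC hB hCB]; exact hD.lam_pos
    rw [mem_inter] at ha
    exact hloc C hC hgC a ha.1 (hfix a ha.2)
  obtain ⟨a, haB⟩ : B.Nonempty := by
    rw [← card_pos, hD.blocks_card B hB]; have := hD.two_lt_k; omega
  ext y
  obtain rfl | hya := eq_or_ne y a
  · exact hfix y haB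
  obtain ⟨C, hC⟩ : {C ∈ 𝓑 | a ∈ C ∧ y ∈ C}.Nonempty := by
    rw [← card_pos, hD.pair_blocks a y hya.symm]; exact hD.lam_pos
  obtain ⟨hC, haC, hyC⟩ := mem_filter.mp hC
  exact hfixed C hC (hD.smul_eq_of_fixedPoint_mem hsym hg hfixed (hfix a haB) hC haC) y hyC

theorem existsUnique_fixedPoint_of_isPGroup {Γ : Type*} [Group Γ] [MulAction Γ P] {p : ℕ}
    [Fact p.Prime] (hD : IsDesign 𝓑 v k lam) (hΓ : IsPGroup p Γ) (hpv : p ∣ v - 1)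
    (hAut : ∀ γ : Γ, ∀ C ∈ 𝓑, γ • C ∈ 𝓑)
    (hfree : ∀ γ : Γ, ∀ C ∈ 𝓑, γ • C = C → ∀ a ∈ C, γ • a = a → γ = 1)
    (hlam : ¬ Nat.card Γ ∣ lam) : ∃! x : P, x ∈ fixedPoints Γ P := by
  obtain ⟨x, hx⟩ : (fixedPoints Γ P).Nonempty := by
    have hv : 1 ≤ v := by have := hD.k_lt_v; omega
    have hmod := hΓ.card_modEq_card_fixedPoints P
    rw [Nat.card_eq_fintype_card, hD.card_points, ← Nat.sub_add_cancel hv] at hmod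
    have hone := ((Nat.modEq_zero_iff_dvd.2 hpv).add_right 1).symm.trans hmod
    rw [← Set.ncard_pos, ← Nat.card_coe_set_eq]
    refine Nat.pos_of_ne_zero fun h0 => (Fact.out : p.Prime).one_lt.ne' ?_
    rw [h0, zero_add] at hone
    exact Nat.dvd_one.mp (Nat.modEq_zero_iff_dvd.mp hone)
  refine ⟨x, hx, fun y hy => by_contra fun hyx => hlam ?_⟩
  have hfix {z : P} (hz : z ∈ fixedPoints Γ P) (γ : Γ) {C : Finset P} (hzC : z ∈ C) :
      z ∈ γ • C := by
    simpa [hz γ] using Finset.smul_mem_smul_finset (a := γ) hzC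
  let Λ : SubMulAction Γ (Finset P) :=
    { carrier := {C | C ∈ 𝓑 ∧ y ∈ C ∧ x ∈ C}
      smul_mem' := fun γ C ⟨hC, hyC, hxC⟩ => ⟨hAut γ C hC, hfix hy γ hyC, hfix hx γ hxC⟩ }
  have hΛ : Nat.card Λ = lam := by
    rw [← hD.pair_blocks y x hyx, ← Fintype.card_coe, ← Nat.card_eq_fintype_card]
    exact Nat.card_congr (Equiv.subtypeEquivRight fun _ => by rw [mem_filter]; exact Iff.rfl)
  rw [← hΛ]
  exact card_dvd_card_of_free fun γ C hγC =>
    hfree γ C C.2.1 (congrArg Subtype.val hγC) x C.2.2.2 (hx γ)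

end IsDesign

section FlagTransitive

variable {α : Type*} [DecidableEq α] {G : Subgroup (Equiv.Perm α)} {𝓑 : Finset (Finset α)}

/-- The permutation group `G_C^C` induced on `C` by its stabilizer is abelian. -/
def InducedAbelian (G : Subgroup (Equiv.Perm α)) (C : Finset α) : Prop :=
  ∀ g : G, g • C = C → ∀ h : G, h • C = C → ∀ a ∈ C, g • (h • a) = h • (g • a)

theorem IsFlagTransitive.exists_smul_eq (hflag : IsFlagTransitive G 𝓑) {C : Finset α}
    (hC : C ∈ 𝓑) {a b : α} (ha : a ∈ C) (hb : b ∈ C) : ∃ g : G, g • C = C ∧ g • a = b := by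
  obtain ⟨g, hg, hga, hgC⟩ := hflag C hC C hC a ha b hb
  exact ⟨⟨g, hg⟩, hgC, hga⟩

theorem InducedAbelian.of_isFlagTransitive (hflag : IsFlagTransitive G 𝓑) {B : Finset α}
    (hB : B ∈ 𝓑) {b : α} (hb : b ∈ B) (hab : InducedAbelian G B) {C : Finset α} (hC : C ∈ 𝓑) :
    InducedAbelian G C := by
  intro g hg h hh a ha
  obtain ⟨τ, hτG, -, hτB⟩ := hflag B hB C hC b hb a ha
  set τ : G := ⟨τ, hτG⟩
  replace hτB : τ • B = C := hτB
  have hconj {u : G} (hu : u • C = C) : (τ⁻¹ * u * τ) • B = B := by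
    rw [mul_smul, mul_smul, hτB, hu, inv_smul_eq_iff, hτB]
  have hmem : τ⁻¹ • a ∈ B := Finset.inv_smul_mem_iff.mpr (hτB ▸ ha)
  have := hab _ (hconj hg) _ (hconj hh) _ hmem
  simpa only [mul_smul, smul_inv_smul, inv_smul_smul, smul_left_cancel_iff] using this

/-- A transitive abelian permutation group is regular. -/
theorem InducedAbelian.smul_eq_of_smul_eq (hflag : IsFlagTransitive G 𝓑) {C : Finset α}
    (hC : C ∈ 𝓑) (hab : InducedAbelian G C) {g : G} (hg : g • C = C) {a : α} (ha : a ∈ C)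
    (hga : g • a = a) {c : α} (hc : c ∈ C) : g • c = c := by
  obtain ⟨h, hh, rfl⟩ := hflag.exists_smul_eq hC ha hc
  rw [hab g hg h hh a ha, hga]

theorem InducedAbelian.mul_comm_of_faithful {B : Finset α} (hab : InducedAbelian G B)
    (hfaith : ∀ g : G, g • B = B → (∀ a ∈ B, g • a = a) → g = 1) {g h : G} (hg : g • B = B)
    (hh : h • B = B) : g * h = h * g := by
  have hB : (h * g)⁻¹ * (g * h) = 1 := by
    refine hfaith _ ?_ fun a ha => ?_
    · rw [mul_smul, mul_smul, hh, hg, inv_smul_eq_iff, mul_smul, hg, hh]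
    · rw [mul_smul, inv_smul_eq_iff, mul_smul, mul_smul, hab g hg h hh a ha]
  exact (inv_mul_eq_one.mp hB).symm

end FlagTransitive

section Symmetric

variable {𝓑 : Finset (Finset P)} {v k lam : ℕ} {G : Subgroup (Equiv.Perm P)}

theorem InducedAbelian.eq_one_of_smul_eq (hD : IsDesign 𝓑 v k lam) (hsym : #𝓑 = v)
    (hAut : IsAutGroup G 𝓑) (hflag : IsFlagTransitive G 𝓑) (hab : ∀ C ∈ 𝓑, InducedAbelian G C)
    {C : Finset P} (hC : C ∈ 𝓑) {g : G} (hgC : g • C = C) {a : P} (ha : a ∈ C)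
    (hga : g • a = a) : g = 1 :=
  Subtype.ext <| hD.eq_one_of_fixes_block hsym (fun D hD => hAut g g.2 D hD)
    (fun D hD hgD _ hb hgb _ hc => (hab D hD).smul_eq_of_smul_eq hflag hD hgD hb hgb hc) hC
    (fun _ hc => (hab C hC).smul_eq_of_smul_eq hflag hC hgC ha hga hc)

theorem card_stabilizer_block (hD : IsDesign 𝓑 v k lam) (hflag : IsFlagTransitive G 𝓑)
    {B : Finset P} (hB : B ∈ 𝓑) (hfree : ∀ g : G, g • B = B → ∀ a ∈ B, g • a = a → g = 1) :
    Nat.card (stabilizer G B) = k := by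
  obtain ⟨a, ha⟩ : B.Nonempty := by
    rw [← card_pos, hD.blocks_card B hB]; have := hD.two_lt_k; omega
  rw [card_eq_ncard_of_orbit_eq (a := a) (T := B), Set.ncard_coe_finset, hD.blocks_card B hB]
  · ext c
    refine ⟨?_, fun hc => ?_⟩
    · rintro ⟨h, rfl⟩
      have hhB : (h : G) • B = B := h.2
      have := Finset.smul_mem_smul_finset (a := (h : G)) ha
      rwa [hhB] at this
    · obtain ⟨g, hg, rfl⟩ := hflag.exists_smul_eq hB ha hc
      exact ⟨⟨g, hg⟩, rfl⟩
  · exact fun h hh => Subtype.ext (hfree h h.2 a ha hh)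

theorem card_stabilizer_point (hD : IsDesign 𝓑 v k lam) (hsym : #𝓑 = v)
    (hAut : IsAutGroup G 𝓑) (hflag : IsFlagTransitive G 𝓑)
    (hfree : ∀ C ∈ 𝓑, ∀ g : G, g • C = C → ∀ a ∈ C, g • a = a → g = 1) (x : P) :
    Nat.card (stabilizer G x) = k := by
  obtain ⟨C, hC⟩ : {C ∈ 𝓑 | x ∈ C}.Nonempty := by
    rw [← card_pos, hD.card_filter_mem hsym x]; have := hD.two_lt_k; omega
  obtain ⟨hC, hxC⟩ := mem_filter.mp hC
  rw [card_eq_ncard_of_orbit_eq (a := C) (T := ({C ∈ 𝓑 | x ∈ C} : Finset (Finset P))),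
    Set.ncard_coe_finset, hD.card_filter_mem hsym x]
  · ext D
    simp only [mem_orbit_iff, coe_filter, Set.mem_ofPred_eq]
    refine ⟨?_, fun ⟨hD, hxD⟩ => ?_⟩
    · rintro ⟨h, rfl⟩
      have hhx : (h : G) • x = x := h.2
      have := Finset.smul_mem_smul_finset (a := (h : G)) hxC
      exact ⟨hAut _ (h : G).2 C hC, by rwa [hhx] at this⟩
    · obtain ⟨g, hg, hgx, rfl⟩ := hflag C hC D hD x hxC x hxD
      exact ⟨⟨⟨g, hg⟩, hgx⟩, rfl⟩
  · exact fun h hh => Subtype.ext (hfree C hC h hh x hxC h.2)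

theorem exists_not_mem_and_stabilizer_le (hD : IsDesign 𝓑 v k lam) (hsym : #𝓑 = v)
    (hAut : IsAutGroup G 𝓑) (hflag : IsFlagTransitive G 𝓑)
    (hfree : ∀ C ∈ 𝓑, ∀ g : G, g • C = C → ∀ a ∈ C, g • a = a → g = 1) {B : Finset P}
    (hB : B ∈ 𝓑) (hcomm : ∀ g h : G, g • B = B → h • B = B → g * h = h * g) :
    ∃ x ∉ B, stabilizer G B ≤ stabilizer G x := by
  obtain ⟨p, hp, hpv, hpk⟩ := exists_prime_dvd_sub_one_not_ordProj_dvd hD.lam_pos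
    (hD.lam_lt hsym) (hD.sub_one_mul_lam hsym)
  have := Fact.mk hp
  obtain ⟨S⟩ : Nonempty (Sylow p (stabilizer G B)) := inferInstance
  have hS : Nat.card S = p ^ k.factorization p := by
    rw [S.card_eq_multiplicity, card_stabilizer_block hD hflag hB (hfree B hB)]
  obtain ⟨x, hx, hxu⟩ := hD.existsUnique_fixedPoint_of_isPGroup S.isPGroup' hpv
    (fun s C hC => hAut _ (s : G).2 C hC)
    (fun s C hC hsC a ha hsa => Subtype.ext (Subtype.ext (hfree C hC _ hsC a ha hsa)))
    (hS ▸ hpk)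
  refine ⟨x, fun hxB => ?_, fun h hh => hxu _ fun s => ?_⟩
  · have hS1 : Nat.card S = 1 := Subgroup.card_eq_one.mpr <| (Subgroup.eq_bot_iff_forall _).2
      fun s hs => Subtype.ext (hfree B hB _ s.2 x hxB (hx ⟨s, hs⟩))
    exact hpk (hS ▸ hS1 ▸ one_dvd lam)
  · change ((s : stabilizer G B) : G) • h • x = h • x
    rw [← mul_smul, hcomm _ _ (s : stabilizer G B).2 hh, mul_smul]
    exact congrArg (h • ·) (hx s)

end Symmetric

/-- **Proposition 5.1.** If `G` is a flag-transitive automorphism group of a symmetric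
design and the induced permutation group `G_B^B` is abelian, then `G_B` is faithful on
`B` and `G_B = G_x` for some point `x ∉ B`. -/
theorem stmt_11 (𝓑 : Finset (Finset P)) (v k lam : ℕ)
    (hD : IsDesign 𝓑 v k lam) (hsym : 𝓑.card = v)
    (G : Subgroup (Equiv.Perm P)) (hAut : IsAutGroup G 𝓑)
    (hflag : IsFlagTransitive G 𝓑)
    (B : Finset P) (hB : B ∈ 𝓑)
    (hab : ∀ g : G, g • B = B → ∀ h : G, h • B = B → ∀ a ∈ B, g • (h • a) = h • (g • a)) :
    (∀ g : G, g • B = B → (∀ a ∈ B, g • a = a) → g = 1) ∧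
    ∃ x : P, x ∉ B ∧ MulAction.stabilizer G B = MulAction.stabilizer G x := by
  obtain ⟨b, hb⟩ : B.Nonempty := by
    rw [← card_pos, hD.blocks_card B hB]; have := hD.two_lt_k; omega
  have hfree : ∀ C ∈ 𝓑, ∀ g : G, g • C = C → ∀ a ∈ C, g • a = a → g = 1 :=
    fun C hC _ hgC _ ha hga => InducedAbelian.eq_one_of_smul_eq hD hsym hAut hflag
      (fun _ hC' => InducedAbelian.of_isFlagTransitive hflag hB hb hab hC') hC hgC ha hga
  have hfaith : ∀ g : G, g • B = B → (∀ a ∈ B, g • a = a) → g = 1 :=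
    fun g hg hfix => hfree B hB g hg b hb (hfix b hb)
  obtain ⟨x, hxB, hle⟩ := exists_not_mem_and_stabilizer_le hD hsym hAut hflag hfree hB
    fun g h hg hh => InducedAbelian.mul_comm_of_faithful hab hfaith hg hh
  refine ⟨hfaith, x, hxB, Subgroup.eq_of_le_of_card_ge hle ?_⟩
  rw [card_stabilizer_point hD hsym hAut hflag hfree x,
    card_stabilizer_block hD hflag hB (hfree B hB)]
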